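/- For real t with 0 < t < 3/(4·4^{1/3}) (so that the series below converges), the unique real root x(t) of x⁴ - x + t = 0 that tends to 0 as t → 0 is given by the convergent series x(t) = t · ∑_{k≥0} ((1/4)_k (1/2)_k (3/4)_k / ((2/3)_k (4/3)_k k!)) · (4 (4t/3)³)^k, i.e. x(t) = t · ₃F₂(1/4, 1/2, 3/4; 2/3, 4/3; 4(4t/3)³). -/

import Mathlib

/-! The numbers `raney p n r` obey the recursion forced on the coefficients of `B(u)^r` by
`B = 1 + u B^p`, namely `B^(r+1) = B^r + u B^(r+p)`. The recursion alone gives the convolution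
`raney p n (r + s) = ∑_{i+j=n} raney p i r * raney p j s`, so by Cauchy products
`∑ raney p n r uⁿ = B(u)^r` wherever the series `B(u) = ∑ raney p n 1 uⁿ` converges, and `B`
satisfies `B = 1 + u B^p`. For `p = 4` the closed form `raney 4 n 1 = (4n)! / (n! (3n+1)!)`
identifies the hypergeometric terms with the coefficients of `B(t³)` and bounds them by
`(256/27)ⁿ`; then `x = t B(t³)` gives `x⁴ - x + t = t (t³ B⁴ - B + 1) = 0`. -/

open scoped BigOperators

/-- Pochhammer symbol `(a)_k` on `ℝ`. -/
noncomputable def pochR (a : ℝ) (k : ℕ) : ℝ := ∏ i ∈ Finset.range k, (a + i)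

/-- Terms of the hypergeometric series `₃F₂(1/4,1/2,3/4; 2/3,4/3; 4(4t/3)³)` giving the
small root of `x⁴ - x + t = 0`. -/
noncomputable def quarticTerm (t : ℝ) (k : ℕ) : ℝ :=
  pochR (1/4) k * pochR (1/2) k * pochR (3/4) k /
    (pochR (2/3) k * pochR (4/3) k * (k.factorial : ℝ)) * (4 * (4 * t / 3) ^ 3) ^ k

open Finset Nat

def raney (p : ℕ) : ℕ → ℕ → ℕ
  | 0, _ => 1
  | _ + 1, 0 => 0
  | n + 1, r + 1 => raney p (n + 1) r + raney p n (r + p)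
termination_by n r => (n, r)

@[simp] theorem raney_zero_left (p r : ℕ) : raney p 0 r = 1 := by cases r <;> rw [raney]

@[simp] theorem raney_succ_zero (p n : ℕ) : raney p (n + 1) 0 = 0 := by rw [raney]

theorem raney_succ_succ (p n r : ℕ) :
    raney p (n + 1) (r + 1) = raney p (n + 1) r + raney p n (r + p) := by
  rw [raney]

theorem raney_succ_one (p n : ℕ) : raney p (n + 1) 1 = raney p n p := by
  rw [raney_succ_succ, raney_succ_zero, zero_add, zero_add]

theorem raney_add_right (p r : ℕ) : ∀ n s : ℕ,
    raney p n (r + s) = ∑ ij ∈ antidiagonal n, raney p ij.1 r * raney p ij.2 s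
  | 0, _ => by simp
  | n + 1, 0 => by simp [sum_antidiagonal_succ']
  | n + 1, s + 1 => by
    rw [sum_antidiagonal_succ', ← add_assoc, raney_succ_succ]
    simp only [raney_succ_succ, mul_add, sum_add_distrib, raney_zero_left, mul_one]
    rw [raney_add_right p r (n + 1) s, sum_antidiagonal_succ', add_assoc r s p,
      raney_add_right p r n (s + p)]
    simp only [raney_zero_left, mul_one]
    ring
termination_by n s => (n, s)

theorem raney_mul_factorial_mul_factorial (q : ℕ) : ∀ n m : ℕ,
    raney (q + 1) n (m + 1) * n ! * (q * n + m + 1)! = (m + 1) * ((q + 1) * n + m)!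
  | 0, m => by simp [factorial_succ]
  | n + 1, 0 => by
    have ih := raney_mul_factorial_mul_factorial q n q
    rw [raney_succ_one, show q * (n + 1) + 0 + 1 = q * n + q + 1 by ring,
      show (q + 1) * (n + 1) + 0 = (q + 1) * n + q + 1 by ring, factorial_succ n,
      factorial_succ ((q + 1) * n + q)]
    linear_combination (n + 1) * ih
  | n + 1, m + 1 => by
    have ih₁ := raney_mul_factorial_mul_factorial q (n + 1) m
    have ih₂ := raney_mul_factorial_mul_factorial q n (m + 1 + q)
    rw [show q * n + (m + 1 + q) + 1 = q * (n + 1) + m + 1 + 1 by ring,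
      show (q + 1) * n + (m + 1 + q) = (q + 1) * (n + 1) + m by ring] at ih₂
    rw [raney_succ_succ, show m + 1 + (q + 1) = m + 1 + q + 1 by ring,
      show q * (n + 1) + (m + 1) + 1 = q * (n + 1) + m + 1 + 1 by ring,
      show (q + 1) * (n + 1) + (m + 1) = (q + 1) * (n + 1) + m + 1 by ring]
    rw [factorial_succ (q * (n + 1) + m + 1)] at ih₂ ⊢
    rw [factorial_succ ((q + 1) * (n + 1) + m)]
    rw [factorial_succ n] at ih₁ ⊢
    linear_combination (q * (n + 1) + m + 2) * ih₁ + (n + 1) * ih₂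
termination_by n m => (n, m)

section RaneySeries

variable {p : ℕ} {u : ℝ}

theorem hasSum_raney_mul_pow (h : Summable fun n ↦ (raney p n 1 : ℝ) * u ^ n) :
    ∀ r : ℕ,
      HasSum (fun n ↦ (raney p n r : ℝ) * u ^ n) ((∑' n, (raney p n 1 : ℝ) * u ^ n) ^ r)
  | 0 => by
    rw [pow_zero]
    convert hasSum_ite_eq 0 (1 : ℝ) using 1
    funext n
    cases n <;> simp
  | r + 1 => by
    have hr := hasSum_raney_mul_pow h r
    have hr_norm := summable_norm_iff.2 hr.summable
    have h_norm := summable_norm_iff.2 h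
    have hconv : (fun n ↦ (raney p n (r + 1) : ℝ) * u ^ n) =
        fun n ↦ ∑ ij ∈ antidiagonal n,
          (raney p ij.1 r : ℝ) * u ^ ij.1 * ((raney p ij.2 1 : ℝ) * u ^ ij.2) := by
      funext n
      rw [raney_add_right, Nat.cast_sum, sum_mul]
      refine sum_congr rfl fun ij hij ↦ ?_
      rw [← mem_antidiagonal.1 hij, pow_add]
      push_cast
      ring
    rw [pow_succ, ← hr.tsum_eq,
      tsum_mul_tsum_eq_tsum_sum_antidiagonal_of_summable_norm hr_norm h_norm, hconv]
    exact (summable_norm_sum_mul_antidiagonal_of_summable_norm hr_norm h_norm).of_norm.hasSum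

theorem tsum_raney_eq_one_add (h : Summable fun n ↦ (raney p n 1 : ℝ) * u ^ n) :
    ∑' n, (raney p n 1 : ℝ) * u ^ n = 1 + u * (∑' n, (raney p n 1 : ℝ) * u ^ n) ^ p := by
  rw [← (hasSum_raney_mul_pow h p).tsum_eq, ← tsum_mul_left, h.tsum_eq_zero_add]
  congr 1
  · simp
  · refine tsum_congr fun n ↦ ?_
    rw [raney_succ_one, pow_succ]
    ring

end RaneySeries

theorem raney_four_succ_one_mul (k : ℕ) :
    raney 4 (k + 1) 1 * ((k + 1) * (3 * k + 2) * (3 * k + 3) * (3 * k + 4)) =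
      raney 4 k 1 * ((4 * k + 1) * (4 * k + 2) * (4 * k + 3) * (4 * k + 4)) := by
  have h₀ := raney_mul_factorial_mul_factorial 3 k 0
  have h₁ := raney_mul_factorial_mul_factorial 3 (k + 1) 0
  rw [show 3 * (k + 1) + 0 + 1 = 3 * k + 1 + 1 + 1 + 1 by ring,
    show (3 + 1) * (k + 1) + 0 = 4 * k + 1 + 1 + 1 + 1 by ring, factorial_succ k,
    factorial_succ (3 * k + 1 + 1 + 1), factorial_succ (3 * k + 1 + 1), factorial_succ (3 * k + 1),
    factorial_succ (4 * k + 1 + 1 + 1), factorial_succ (4 * k + 1 + 1), factorial_succ (4 * k + 1),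
    factorial_succ (4 * k)] at h₁
  norm_num at h₀ h₁
  apply Nat.eq_of_mul_eq_mul_right (by positivity : 0 < k ! * (3 * k + 1)!)
  linear_combination h₁ - (4 * k + 1) * (4 * k + 2) * (4 * k + 3) * (4 * k + 4) * h₀

theorem raney_four_succ_one_le (k : ℕ) : 27 * raney 4 (k + 1) 1 ≤ 256 * raney 4 k 1 := by
  have hD : 0 < (k + 1) * (3 * k + 2) * (3 * k + 3) * (3 * k + 4) := by positivity
  refine Nat.le_of_mul_le_mul_right ?_ hD
  calc 27 * raney 4 (k + 1) 1 * ((k + 1) * (3 * k + 2) * (3 * k + 3) * (3 * k + 4))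
      = raney 4 k 1 * (27 * ((4 * k + 1) * (4 * k + 2) * (4 * k + 3) * (4 * k + 4))) := by
        rw [mul_assoc, raney_four_succ_one_mul]
        ring
    _ ≤ raney 4 k 1 * (256 * ((k + 1) * (3 * k + 2) * (3 * k + 3) * (3 * k + 4))) :=
        Nat.mul_le_mul_left _ (by ring_nf; omega)
    _ = 256 * raney 4 k 1 * ((k + 1) * (3 * k + 2) * (3 * k + 3) * (3 * k + 4)) := by ring

theorem pow_mul_raney_four_one_le (n : ℕ) : 27 ^ n * raney 4 n 1 ≤ 256 ^ n := by
  induction n with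
  | zero => simp
  | succ n ih =>
    calc 27 ^ (n + 1) * raney 4 (n + 1) 1 = 27 ^ n * (27 * raney 4 (n + 1) 1) := by ring
      _ ≤ 27 ^ n * (256 * raney 4 n 1) := Nat.mul_le_mul_left _ (raney_four_succ_one_le n)
      _ = 256 * (27 ^ n * raney 4 n 1) := by ring
      _ ≤ 256 * 256 ^ n := Nat.mul_le_mul_left _ ih
      _ = 256 ^ (n + 1) := by ring

theorem summable_raney_four_mul_pow {u : ℝ} (hu : |u| < 27 / 256) :
    Summable fun n ↦ (raney 4 n 1 : ℝ) * u ^ n := by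
  refine Summable.of_norm_bounded (summable_geometric_of_lt_one (by positivity)
    (by linarith : 256 / 27 * |u| < 1)) fun n ↦ ?_
  have hbound : (27 : ℝ) ^ n * raney 4 n 1 ≤ 256 ^ n := by
    exact_mod_cast pow_mul_raney_four_one_le n
  rw [norm_mul, Real.norm_natCast, norm_pow, Real.norm_eq_abs, mul_pow, div_pow]
  gcongr
  rw [le_div_iff₀ (by positivity)]
  linarith

theorem pochR_pos {a : ℝ} (ha : 0 < a) (k : ℕ) : 0 < pochR a k :=
  prod_pos fun i _ ↦ by positivity

theorem pochR_succ (a : ℝ) (k : ℕ) : pochR a (k + 1) = pochR a k * (a + k) :=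
  prod_range_succ _ _

theorem quarticTerm_succ_mul (t : ℝ) (k : ℕ) :
    quarticTerm t (k + 1) * ((k + 1) * (3 * k + 2) * (3 * k + 3) * (3 * k + 4)) =
      quarticTerm t k * ((4 * k + 1) * (4 * k + 2) * (4 * k + 3) * (4 * k + 4)) * t ^ 3 := by
  have := pochR_pos (by norm_num : (0 : ℝ) < 2 / 3) k
  have := pochR_pos (by norm_num : (0 : ℝ) < 4 / 3) k
  simp only [quarticTerm, pochR_succ, factorial_succ, pow_succ]
  push_cast
  field_simp
  ring

theorem quarticTerm_eq_raney (t : ℝ) (k : ℕ) : quarticTerm t k = raney 4 k 1 * (t ^ 3) ^ k := by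
  induction k with
  | zero => simp [quarticTerm, pochR]
  | succ k ih =>
    have hratio : (raney 4 (k + 1) 1 : ℝ) * ((k + 1) * (3 * k + 2) * (3 * k + 3) * (3 * k + 4)) =
        raney 4 k 1 * ((4 * k + 1) * (4 * k + 2) * (4 * k + 3) * (4 * k + 4)) := by
      exact_mod_cast raney_four_succ_one_mul k
    apply mul_right_cancel₀
      (by positivity : ((k + 1) * (3 * k + 2) * (3 * k + 3) * (3 * k + 4) : ℝ) ≠ 0)
    rw [quarticTerm_succ_mul, ih]
    linear_combination -(t ^ 3) ^ (k + 1) * hratio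

theorem quartic_root_hypergeometric (t : ℝ) (ht0 : 0 < t)
    (ht1 : t < 3 / (4 * (4 : ℝ) ^ ((1 : ℝ)/3))) :
    Summable (quarticTerm t) ∧
    (t * ∑' k : ℕ, quarticTerm t k) ^ 4 - (t * ∑' k : ℕ, quarticTerm t k) + t = 0 := by
  have hcube : (3 / (4 * (4 : ℝ) ^ ((1 : ℝ) / 3))) ^ 3 = 27 / 256 := by
    rw [div_pow, mul_pow, ← Real.rpow_natCast ((4 : ℝ) ^ ((1 : ℝ) / 3)),
      ← Real.rpow_mul (by norm_num)]
    norm_num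
  have hu : |t ^ 3| < 27 / 256 := by
    rw [abs_of_pos (by positivity), ← hcube]
    exact pow_lt_pow_left₀ ht1 ht0.le (by norm_num)
  have hsum := summable_raney_four_mul_pow hu
  have hterm : quarticTerm t = fun k ↦ (raney 4 k 1 : ℝ) * (t ^ 3) ^ k :=
    funext (quarticTerm_eq_raney t)
  refine ⟨hterm ▸ hsum, ?_⟩
  rw [hterm]
  linear_combination (-t) * tsum_raney_eq_one_add hsum
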